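/- Let f ∈ ℝ[x₁,…,xₙ] be irreducible and suppose V = f⁻¹(0) ⊂ ℝⁿ contains a point where ∇f ≠ 0. Then every polynomial g ∈ ℝ[x₁,…,xₙ] that vanishes identically on V is a polynomial multiple of f. -/

import Mathlib

/-!
Put the regular direction first, so that `f` is a polynomial in `x₀` over `R = ℝ[x₁, …, xₘ]`,
of positive degree since `∂f/∂x₀ ≠ 0` at the regular point `(t₀, y₀)`. If `f ∤ g`, Gauss's lemma
makes `f` and `g` coprime over `Frac R`, and the resultant gives `A f + B g = c` with
`0 ≠ c ∈ R`. Since `t ↦ f(t, y₀)` changes sign at `t₀`, so does `t ↦ f(t, y)` for all `y` near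
`y₀`; at a root `t` of it `g(t, y) = 0` as well, so `c(y) = 0`. Thus `c` vanishes on an open
set, hence `c = 0`.
-/

open MvPolynomial Topology

open Polynomial in
theorem Polynomial.exists_mul_add_mul_eq_C_of_not_dvd {R : Type*} [CommRing R] [IsDomain R]
    [IsGCDMonoid R] {F G : R[X]} (hF : Irreducible F) (hdeg : F.natDegree ≠ 0) (hFG : ¬F ∣ G) :
    ∃ p q : R[X], ∃ c : R, c ≠ 0 ∧ F * p + G * q = C c := by
  let K := FractionRing R
  have hinj := IsFractionRing.injective R K
  have hprim := hF.isPrimitive hdeg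
  have hcop : IsCoprime (F.map (algebraMap R K)) (G.map (algebraMap R K)) :=
    (hprim.irreducible_iff_irreducible_map_fraction_map.mp hF).coprime_iff_not_dvd.mpr
      fun h ↦ hFG ((hprim.dvd_iff_fraction_map_dvd_fraction_map K).mpr h)
  obtain ⟨p, q, -, -, h⟩ := exists_mul_add_mul_eq_C_resultant F G le_rfl le_rfl (.inl hdeg)
  refine ⟨p, q, _, fun h0 ↦ resultant_ne_zero _ _ hcop ?_, h⟩
  rw [natDegree_map_eq_of_injective hinj, natDegree_map_eq_of_injective hinj,
    resultant_map_map, h0, map_zero]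

theorem HasDerivAt.exists_lt_and_exists_gt {f : ℝ → ℝ} {f' a : ℝ} (hf : HasDerivAt f f' a)
    (hf' : f' ≠ 0) : (∃ x, f x < f a) ∧ ∃ x, f a < f x := by
  constructor
  · by_contra! h
    exact hf' (IsLocalMin.hasDerivAt_eq_zero (.of_forall h) hf)
  · by_contra! h
    exact hf' (IsLocalMax.hasDerivAt_eq_zero (.of_forall h) hf)

theorem Continuous.eventually_exists_eq_zero {Y : Type*} [TopologicalSpace Y] {φ : ℝ × Y → ℝ}
    (hφ : Continuous φ) {y₀ : Y} {a b : ℝ} (ha : φ (a, y₀) < 0) (hb : 0 < φ (b, y₀)) :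
    ∀ᶠ y in 𝓝 y₀, ∃ t, φ (t, y) = 0 := by
  have hneg := (hφ.comp (Continuous.prodMk_right a)).continuousAt.eventually (gt_mem_nhds ha)
  have hpos := (hφ.comp (Continuous.prodMk_right b)).continuousAt.eventually (lt_mem_nhds hb)
  filter_upwards [hneg, hpos] with y hya hyb
  obtain ⟨t, -, ht⟩ := intermediate_value_uIcc (f := fun t ↦ φ (t, y))
    (hφ.comp (Continuous.prodMk_left y)).continuousOn
    ⟨min_le_of_left_le hya.le, le_max_of_le_right hyb.le⟩
  exact ⟨t, ht⟩

namespace MvPolynomial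

theorem finSuccEquiv_pderiv_zero {R : Type*} [CommRing R] {m : ℕ}
    (f : MvPolynomial (Fin (m + 1)) R) :
    finSuccEquiv R m (pderiv 0 f) = Polynomial.derivative (finSuccEquiv R m f) := by
  induction f using MvPolynomial.induction_on with
  | C a => simp [finSuccEquiv_apply]
  | add p q hp hq => simp [hp, hq]
  | mul_X p i hp =>
    cases i using Fin.cases with
    | zero => simp [hp, Polynomial.derivative_mul, finSuccEquiv_X_zero]; ring
    | succ j =>
      simp [hp, Polynomial.derivative_mul, finSuccEquiv_X_succ,
        pderiv_X_of_ne (Fin.succ_ne_zero j)]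
      ring

theorem eventually_exists_eval_cons_eq_zero {m : ℕ} {f : MvPolynomial (Fin (m + 1)) ℝ}
    {x : Fin (m + 1) → ℝ} (hx : eval x f = 0) (hd : eval x (pderiv 0 f) ≠ 0) :
    ∀ᶠ y in 𝓝 (Fin.tail x), ∃ t, eval (Fin.cons t y : Fin (m + 1) → ℝ) f = 0 := by
  have heval (p : MvPolynomial (Fin (m + 1)) ℝ) :
      eval x p = ((finSuccEquiv ℝ m p).map (eval (Fin.tail x))).eval (x 0) := by
    rw [← eval_eq_eval_mv_eval', Fin.cons_self_tail]
  let φ : ℝ × (Fin m → ℝ) → ℝ := fun p ↦ eval (Fin.cons p.1 p.2 : Fin (m + 1) → ℝ) f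
  have hφ : Continuous φ :=
    (continuous_eval f).comp (continuous_fst.finCons (A := fun _ ↦ ℝ) continuous_snd)
  have hφx : φ (x 0, Fin.tail x) = eval x f := by simp [φ, Fin.cons_self_tail]
  have hderiv : HasDerivAt (fun t ↦ φ (t, Fin.tail x)) (eval x (pderiv 0 f)) (x 0) := by
    have := ((finSuccEquiv ℝ m f).map (eval (Fin.tail x))).hasDerivAt (x 0)
    simpa [φ, heval, eval_eq_eval_mv_eval', Polynomial.derivative_map,
      ← finSuccEquiv_pderiv_zero] using this
  obtain ⟨⟨a, ha⟩, ⟨b, hb⟩⟩ := hderiv.exists_lt_and_exists_gt hd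
  rw [hφx, hx] at ha hb
  exact hφ.eventually_exists_eq_zero ha hb

theorem eq_zero_of_eventually_eval_eq_zero {σ : Type*} [Fintype σ]
    {p : MvPolynomial σ ℝ} {y₀ : σ → ℝ} (h : ∀ᶠ y in 𝓝 y₀, eval y p = 0) : p = 0 := by
  obtain ⟨ε, hε, hball⟩ := Metric.eventually_nhds_iff_ball.mp h
  refine funext_set (fun i ↦ Metric.ball (y₀ i) ε) (fun i ↦ ?_) fun y hy ↦ ?_
  · rw [Real.ball_eq_Ioo]; exact Set.Ioo_infinite (by linarith)
  · rw [map_zero]; exact hball y (by rwa [ball_pi _ hε])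

theorem dvd_of_eval_pderiv_zero_ne_zero {m : ℕ} {f : MvPolynomial (Fin (m + 1)) ℝ}
    (hirr : Irreducible f) {x : Fin (m + 1) → ℝ} (hx : eval x f = 0)
    (hd : eval x (pderiv 0 f) ≠ 0) {g : MvPolynomial (Fin (m + 1)) ℝ}
    (hg : ∀ x, eval x f = 0 → eval x g = 0) : f ∣ g := by
  have hdeg : (finSuccEquiv ℝ m f).natDegree ≠ 0 := fun h0 ↦ hd <| by
    rw [show pderiv 0 f = 0 from (finSuccEquiv ℝ m).injective <| by
      rw [finSuccEquiv_pderiv_zero, Polynomial.derivative_of_natDegree_zero h0, map_zero], map_zero]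
  by_contra hfg
  obtain ⟨p, q, c, hc, hpq⟩ := Polynomial.exists_mul_add_mul_eq_C_of_not_dvd
    ((MulEquiv.irreducible_iff (finSuccEquiv ℝ m)).mpr hirr) hdeg (by rwa [map_dvd_iff])
  refine hc (eq_zero_of_eventually_eval_eq_zero (y₀ := Fin.tail x) ?_)
  filter_upwards [eventually_exists_eval_cons_eq_zero hx hd] with y ⟨t, ht⟩
  have := congrArg (fun P ↦ (P.map (eval y)).eval t) hpq
  simp only [Polynomial.map_add, Polynomial.map_mul, Polynomial.eval_add, Polynomial.eval_mul,
    Polynomial.map_C, Polynomial.eval_C, ← eval_eq_eval_mv_eval', ht, hg _ ht] at this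
  simpa using this.symm

end MvPolynomial

/-- real Nullstellensatz for an irreducible polynomial with a regular
zero: if `f ∈ ℝ[x₁,…,xₙ]` is irreducible and its real zero set contains a point
where some partial derivative is nonzero, then every polynomial `g` vanishing on the
real zero set of `f` is a polynomial multiple of `f`. -/
theorem real_nullstellensatz_irreducible_regular (n : ℕ)
    (f : MvPolynomial (Fin n) ℝ) (hirr : Irreducible f)
    (hreg : ∃ x : Fin n → ℝ, eval x f = 0 ∧ ∃ i, eval x (pderiv i f) ≠ 0)
    (g : MvPolynomial (Fin n) ℝ)
    (hg : ∀ x : Fin n → ℝ, eval x f = 0 → eval x g = 0) :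
    f ∣ g := by
  obtain ⟨x, hx, i, hi⟩ := hreg
  cases n with
  | zero => exact i.elim0
  | succ m =>
    let e := renameEquiv ℝ (Equiv.swap 0 i)
    have heval (y : Fin (m + 1) → ℝ) (p : MvPolynomial (Fin (m + 1)) ℝ) :
        eval y (e p) = eval (y ∘ Equiv.swap 0 i) p :=
      eval_rename ..
    rw [← map_dvd_iff e]
    refine dvd_of_eval_pderiv_zero_ne_zero ((MulEquiv.irreducible_iff e).mpr hirr)
      (x := x ∘ Equiv.swap 0 i) ?_ ?_ fun y hy ↦ ?_
    · simpa [heval, Function.comp_def, Equiv.swap_apply_self] using hx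
    · have hpd : pderiv 0 (e f) = e (pderiv i f) := by
        simpa [e] using pderiv_rename (Equiv.swap 0 i).injective i f
      simpa [hpd, heval, Function.comp_def, Equiv.swap_apply_self] using hi
    · rw [heval] at hy ⊢; exact hg _ hy
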